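/- arXiv:2211.15410 — 3 statements merged into one kernel-verified Lean document; each statement's English description precedes it below -/
import Mathlib

section
/- For a multivariate Gaussian mechanism: if f : X → ℝ^k satisfies ‖f(X) - f(X')‖₂ ≤ Δ₂ for all neighboring datasets X, X', then the Rényi divergence of order λ between N(f(X), σ²I) and N(f(X'), σ²I) is at most λΔ₂²/(2σ²). -/
open MeasureTheory Real

/-- Density of the `k`-dimensional Gaussian `N(μ, σ²I)`. -/
noncomputable def gaussDensity {k : ℕ} (μ : EuclideanSpace ℝ (Fin k)) (σ : ℝ)
    (θ : EuclideanSpace ℝ (Fin k)) : ℝ :=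
  (1 / (σ ^ k * Real.sqrt ((2 * π) ^ k))) * Real.exp (-‖θ - μ‖ ^ 2 / (2 * σ ^ 2))

/-- Rényi divergence of order `lam` between densities on ℝ^k. -/
noncomputable def renyiDiv {k : ℕ} (lam : ℝ) (P Q : EuclideanSpace ℝ (Fin k) → ℝ) : ℝ :=
  (1 / (lam - 1)) * Real.log (∫ θ, P θ ^ lam * Q θ ^ (1 - lam))

lemma norm_combo {k : ℕ} (θ μ ν : EuclideanSpace ℝ (Fin k)) (lam : ℝ) :
    lam * ‖θ - μ‖ ^ 2 + (1 - lam) * ‖θ - ν‖ ^ 2 =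
      ‖θ - (ν + lam • (μ - ν))‖ ^ 2 + lam * (1 - lam) * ‖μ - ν‖ ^ 2 := by
  have h1 : θ - μ = (θ - ν) - (μ - ν) := by abel
  have h2 : θ - (ν + lam • (μ - ν)) = (θ - ν) - lam • (μ - ν) := by abel
  rw [h1, h2]
  set b := θ - ν
  set d := μ - ν
  have e1 : ‖b - d‖ ^ 2 = ‖b‖ ^ 2 - 2 * inner ℝ b d + ‖d‖ ^ 2 := by
    rw [norm_sub_sq_real]
  have e2 : ‖b - lam • d‖ ^ 2 = ‖b‖ ^ 2 - 2 * (lam * inner ℝ b d) + lam ^ 2 * ‖d‖ ^ 2 := by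
    rw [norm_sub_sq_real, real_inner_smul_right, norm_smul, mul_pow]
    simp [Real.norm_eq_abs, sq_abs]
  rw [e1, e2]; ring

lemma gauss_renyi_integral {k : ℕ} (μ ν : EuclideanSpace ℝ (Fin k)) (σ lam : ℝ)
    (hσ : 0 < σ) :
    ∫ θ, gaussDensity μ σ θ ^ lam * gaussDensity ν σ θ ^ (1 - lam) =
      Real.exp (lam * (lam - 1) * ‖μ - ν‖ ^ 2 / (2 * σ ^ 2)) := by
  have hC : (0 : ℝ) < 1 / (σ ^ k * Real.sqrt ((2 * π) ^ k)) := by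
    have : (0:ℝ) < (2 * π) ^ k := by positivity
    positivity
  set C : ℝ := 1 / (σ ^ k * Real.sqrt ((2 * π) ^ k)) with hCdef
  set m : EuclideanSpace ℝ (Fin k) := ν + lam • (μ - ν) with hm
  set K : ℝ := Real.exp (lam * (lam - 1) * ‖μ - ν‖ ^ 2 / (2 * σ ^ 2)) with hK
  have hσ2 : (0:ℝ) < 2 * σ ^ 2 := by positivity
  have key : ∀ θ, gaussDensity μ σ θ ^ lam * gaussDensity ν σ θ ^ (1 - lam) =
      K * (C * Real.exp (-‖θ - m‖ ^ 2 / (2 * σ ^ 2))) := by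
    intro θ
    unfold gaussDensity
    rw [Real.mul_rpow hC.le (Real.exp_pos _).le, Real.mul_rpow hC.le (Real.exp_pos _).le,
      ← Real.exp_mul, ← Real.exp_mul]
    have hCsum : C ^ lam * C ^ (1 - lam) = C := by
      rw [← Real.rpow_add hC, add_sub_cancel, Real.rpow_one]
    have harg : -‖θ - μ‖ ^ 2 / (2 * σ ^ 2) * lam + -‖θ - ν‖ ^ 2 / (2 * σ ^ 2) * (1 - lam)
        = lam * (lam - 1) * ‖μ - ν‖ ^ 2 / (2 * σ ^ 2) + -‖θ - m‖ ^ 2 / (2 * σ ^ 2) := by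
      have h := norm_combo θ μ ν lam
      field_simp
      nlinarith [h]
    calc C ^ lam * Real.exp (-‖θ - μ‖ ^ 2 / (2 * σ ^ 2) * lam) *
          (C ^ (1 - lam) * Real.exp (-‖θ - ν‖ ^ 2 / (2 * σ ^ 2) * (1 - lam)))
        = (C ^ lam * C ^ (1 - lam)) * Real.exp (-‖θ - μ‖ ^ 2 / (2 * σ ^ 2) * lam +
            -‖θ - ν‖ ^ 2 / (2 * σ ^ 2) * (1 - lam)) := by
          rw [Real.exp_add]; ring
      _ = K * (C * Real.exp (-‖θ - m‖ ^ 2 / (2 * σ ^ 2))) := by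
          rw [hCsum, hK, harg, Real.exp_add]; ring
  simp_rw [key]
  rw [integral_const_mul, integral_const_mul]
  have htrans : ∫ θ : EuclideanSpace ℝ (Fin k), Real.exp (-‖θ - m‖ ^ 2 / (2 * σ ^ 2)) =
      ∫ θ : EuclideanSpace ℝ (Fin k), Real.exp (-‖θ‖ ^ 2 / (2 * σ ^ 2)) := by
    exact integral_sub_right_eq_self (fun θ ↦ Real.exp (-‖θ‖ ^ 2 / (2 * σ ^ 2))) m
  rw [htrans]
  have hb : (0:ℝ) < 1 / (2 * σ ^ 2) := by positivity
  have hgauss : ∫ θ : EuclideanSpace ℝ (Fin k), Real.exp (-‖θ‖ ^ 2 / (2 * σ ^ 2)) =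
      (π / (1 / (2 * σ ^ 2))) ^ ((Module.finrank ℝ (EuclideanSpace ℝ (Fin k)) : ℝ) / 2) := by
    rw [← GaussianFourier.integral_rexp_neg_mul_sq_norm hb]
    congr 1 with θ
    congr 1
    field_simp
  rw [hgauss, finrank_euclideanSpace_fin]
  have hsqrt : Real.sqrt ((2 * π) ^ k) = (2 * π) ^ ((k : ℝ) / 2) := by
    rw [Real.sqrt_eq_rpow, ← Real.rpow_natCast (2 * π) k, ← Real.rpow_mul (by positivity)]
    congr 1; ring
  have hσk : (σ ^ 2 : ℝ) ^ ((k : ℝ) / 2) = σ ^ k := by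
    rw [← Real.rpow_natCast σ 2, ← Real.rpow_mul hσ.le, ← Real.rpow_natCast σ k]
    congr 1; ring
  have hval : C * (π / (1 / (2 * σ ^ 2))) ^ ((k : ℝ) / 2) = 1 := by
    have h1 : π / (1 / (2 * σ ^ 2)) = (2 * π) * σ ^ 2 := by
      field_simp
    rw [h1, Real.mul_rpow (by positivity) (by positivity), hσk, hCdef, hsqrt]
    have hpos : (0:ℝ) < (2 * π) ^ ((k : ℝ) / 2) := Real.rpow_pos_of_pos (by positivity) _
    field_simp
  rw [hval, mul_one]

/-- RDP of the multivariate Gaussian mechanism with bounded ℓ₂ sensitivity. -/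
theorem gaussian_mechanism_rdp {X : Type*} (adj : X → X → Prop) {k : ℕ}
    (f : X → EuclideanSpace ℝ (Fin k)) (Δ σ lam : ℝ)
    (hσ : 0 < σ) (hlam : 1 < lam)
    (hsens : ∀ x x', adj x x' → ‖f x - f x'‖ ≤ Δ) :
    ∀ x x', adj x x' →
      renyiDiv lam (gaussDensity (f x) σ) (gaussDensity (f x') σ) ≤
        lam * Δ ^ 2 / (2 * σ ^ 2) := by
  intro x x' hadj
  have hd : ‖f x - f x'‖ ≤ Δ := hsens x x' hadj
  rw [renyiDiv, gauss_renyi_integral (f x) (f x') σ lam hσ, Real.log_exp]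
  have hne : lam - 1 ≠ 0 := by linarith
  have heq : 1 / (lam - 1) * (lam * (lam - 1) * ‖f x - f x'‖ ^ 2 / (2 * σ ^ 2)) =
      lam * ‖f x - f x'‖ ^ 2 / (2 * σ ^ 2) := by
    field_simp
  rw [heq]
  have hsq : ‖f x - f x'‖ ^ 2 ≤ Δ ^ 2 := by
    have := norm_nonneg (f x - f x')
    nlinarith
  have hlam0 : 0 < lam := by linarith
  have hden : (0:ℝ) < 2 * σ ^ 2 := by positivity
  gcongr
end

section
/- For a coordinate-independent function f : ℝ^d → ℝ^k with per-coordinate sensitivities Δ₁, ..., Δ_k each attained, the ℓ_p-sensitivity of f is (Σᵢ Δᵢ^p)^{1/p}, which for p > 1 is strictly smaller than Σᵢ Δᵢ whenever at least two Δᵢ are nonzero. -/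
open Real BigOperators

/-- The ℓ_p "norm" of a finite vector, `(∑ |x i|^p)^(1/p)` (with real exponent). -/
noncomputable def lpNorm {k : ℕ} (p : ℝ) (x : Fin k → ℝ) : ℝ :=
  (∑ i, |x i| ^ p) ^ (1 / p)

/-- For a coordinate-independent function with attained per-coordinate sensitivities,
the ℓ_p-sensitivity is `(∑ Δᵢ^p)^(1/p)`, which for `p > 1` is strictly smaller than
`∑ Δᵢ` whenever at least two `Δᵢ` are nonzero. -/
theorem coordinate_independent_lp_sensitivity {d k : ℕ} (p : ℝ) (hp : 1 ≤ p)
    (f : (Fin d → ℝ) → Fin k → ℝ)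
    (P : Fin k → Set (Fin d))
    (hdisj : ∀ i j, i ≠ j → Disjoint (P i) (P j))
    (hindep : ∀ i (X X' : Fin d → ℝ), (∀ l ∈ P i, X l = X' l) → f X i = f X' i)
    (Δ : Fin k → ℝ) (hΔ : ∀ i, 0 ≤ Δ i)
    (hbound : ∀ i (X X' : Fin d → ℝ), (∀ l, l ∉ P i → X l = X' l) →
      |f X i - f X' i| ≤ Δ i)
    (hattain : ∀ i, ∃ X X' : Fin d → ℝ,
      (∀ l, l ∉ P i → X l = X' l) ∧ |f X i - f X' i| = Δ i) :
    (∃ X X' : Fin d → ℝ,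
      lpNorm p (fun i => f X i - f X' i) = (∑ i, Δ i ^ p) ^ (1 / p)) ∧
    (∀ X X' : Fin d → ℝ,
      lpNorm p (fun i => f X i - f X' i) ≤ (∑ i, Δ i ^ p) ^ (1 / p)) ∧
    (1 < p → (∃ i j : Fin k, i ≠ j ∧ Δ i ≠ 0 ∧ Δ j ≠ 0) →
      (∑ i, Δ i ^ p) ^ (1 / p) < ∑ i, Δ i) := by
  classical
  have hp0 : (0:ℝ) < p := lt_of_lt_of_le one_pos hp
  have hpne : p ≠ 0 := ne_of_gt hp0
  have key : ∀ i (X X' : Fin d → ℝ), |f X i - f X' i| ≤ Δ i := by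
    intro i X X'
    set X'' : Fin d → ℝ := fun l => if l ∈ P i then X l else X' l with hX''
    have h1 : f X i = f X'' i := hindep i X X'' (by
      intro l hl; simp [hX'', hl])
    have h2 : |f X'' i - f X' i| ≤ Δ i := hbound i X'' X' (by
      intro l hl; simp [hX'', hl])
    rwa [h1]
  refine ⟨?_, ?_, ?_⟩
  · choose g g' hg hΔg using hattain
    set X : Fin d → ℝ := fun l => if h : ∃ i, l ∈ P i then g h.choose l else 0 with hX
    set X' : Fin d → ℝ := fun l => if h : ∃ i, l ∈ P i then g' h.choose l else 0 with hX'
    refine ⟨X, X', ?_⟩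
    have hchoose : ∀ i l, l ∈ P i → ∀ (h : ∃ j, l ∈ P j), h.choose = i := by
      intro i l hl h
      by_contra hne
      exact Set.disjoint_left.mp (hdisj _ _ hne) h.choose_spec hl
    have hag : ∀ i, f X i = f (g i) i := by
      intro i
      apply hindep i X (g i)
      intro l hl
      have h : ∃ j, l ∈ P j := ⟨i, hl⟩
      simp only [hX, dif_pos h, hchoose i l hl h]
    have hag' : ∀ i, f X' i = f (g' i) i := by
      intro i
      apply hindep i X' (g' i)
      intro l hl
      have h : ∃ j, l ∈ P j := ⟨i, hl⟩
      simp only [hX', dif_pos h, hchoose i l hl h]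
    unfold lpNorm
    congr 1
    apply Finset.sum_congr rfl
    intro i _
    have : |f X i - f X' i| = Δ i := by rw [hag i, hag' i]; exact hΔg i
    rw [this]
  · intro X X'
    unfold lpNorm
    apply Real.rpow_le_rpow
    · exact Finset.sum_nonneg fun i _ => Real.rpow_nonneg (abs_nonneg _) p
    · exact Finset.sum_le_sum fun i _ =>
        Real.rpow_le_rpow (abs_nonneg _) (key i X X') hp0.le
    · positivity
  · rintro hp1 ⟨i, j, hij, hi, hj⟩
    set S : ℝ := ∑ i, Δ i with hS
    have hiS : Δ i < S := by
      have : ∑ l ∈ {i}, Δ l < ∑ l, Δ l := by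
        apply Finset.sum_lt_sum_of_subset (Finset.subset_univ _)
          (Finset.mem_univ j) (by simp [Ne.symm hij])
          (lt_of_le_of_ne (hΔ j) (Ne.symm hj))
          (fun l _ _ => hΔ l)
      simpa using this
    have hSpos : (0:ℝ) < S := lt_of_le_of_lt (hΔ i) hiS
    have hle : ∀ l, Δ l ≤ S := by
      intro l
      exact Finset.single_le_sum (fun m _ => hΔ m) (Finset.mem_univ l)
    have hstep : ∀ l, Δ l ^ p ≤ S ^ (p - 1) * Δ l := by
      intro l
      rcases eq_or_lt_of_le (hΔ l) with h0 | h0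
      · rw [← h0, Real.zero_rpow hpne, mul_zero]
      · calc Δ l ^ p = Δ l ^ (p - 1) * Δ l := by
              rw [← Real.rpow_add_one (ne_of_gt h0)]; ring_nf
          _ ≤ S ^ (p - 1) * Δ l :=
              mul_le_mul_of_nonneg_right
                (Real.rpow_le_rpow (hΔ l) (hle l) (by linarith)) (hΔ l)
    have hstrict : Δ i ^ p < S ^ (p - 1) * Δ i := by
      have h0 : 0 < Δ i := lt_of_le_of_ne (hΔ i) (Ne.symm hi)
      calc Δ i ^ p = Δ i ^ (p - 1) * Δ i := by
            rw [← Real.rpow_add_one (ne_of_gt h0)]; ring_nf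
        _ < S ^ (p - 1) * Δ i :=
            mul_lt_mul_of_pos_right
              (Real.rpow_lt_rpow (hΔ i) hiS (by linarith)) h0
    have hsum : ∑ l, Δ l ^ p < S ^ p := by
      calc ∑ l, Δ l ^ p < ∑ l, S ^ (p - 1) * Δ l :=
            Finset.sum_lt_sum (fun l _ => hstep l) ⟨i, Finset.mem_univ i, hstrict⟩
        _ = S ^ (p - 1) * S := by rw [← Finset.mul_sum]
        _ = S ^ p := by rw [← Real.rpow_add_one (ne_of_gt hSpos)]; ring_nf
    calc (∑ l, Δ l ^ p) ^ (1 / p) < (S ^ p) ^ (1 / p) :=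
          Real.rpow_lt_rpow
            (Finset.sum_nonneg fun l _ => Real.rpow_nonneg (hΔ l) p) hsum
            (by positivity)
      _ = S := by
          rw [← Real.rpow_mul hSpos.le, mul_one_div, div_self hpne, Real.rpow_one]
end

section
/- For all integers n ≥ 1, √(2πn)·(n/e)^n ≤ n! ≤ e^{1/(12n)}·√(2πn)·(n/e)^n. -/
open Real

open Filter Nat Topology Stirling in
lemma stirling_step (m : ℕ) :
    Real.log (stirlingSeq (m + 1)) - Real.log (stirlingSeq (m + 2)) ≤
      1 / (12 * ((m : ℝ) + 1)) - 1 / (12 * ((m : ℝ) + 2)) := by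
  have hmain := log_stirlingSeq_diff_hasSum m
  set r : ℝ := (1 / (2 * (↑(m + 1) : ℝ) + 1)) ^ 2 with hr
  have hr0 : (0 : ℝ) ≤ r := sq_nonneg _
  have hr1 : r < 1 := by
    rw [hr, one_div, inv_pow]
    refine inv_lt_one_of_one_lt₀ (one_lt_pow₀ ?_ two_ne_zero)
    have : (0:ℝ) < 2 * (↑(m+1):ℝ) := by positivity
    linarith
  have hgeo : HasSum (fun k : ℕ => (1 / 3 : ℝ) * r ^ (k + 1)) ((r / 3) * (1 - r)⁻¹) := by
    have := (hasSum_geometric_of_lt_one hr0 hr1).mul_left (r / 3)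
    refine this.congr_fun fun k => ?_
    ring
  have hle : Real.log (stirlingSeq (m + 1)) - Real.log (stirlingSeq (m + 2)) ≤
      (r / 3) * (1 - r)⁻¹ := by
    refine hasSum_le (fun k => ?_) hmain hgeo
    have h1 : (1 : ℝ) / (2 * (↑(k + 1) : ℝ) + 1) ≤ 1 / 3 := by
      apply div_le_div_of_nonneg_left (by norm_num) (by norm_num)
      have : (1:ℝ) ≤ (↑(k+1):ℝ) := by exact_mod_cast Nat.one_le_iff_ne_zero.mpr (Nat.succ_ne_zero k)
      linarith
    have h2 : (0:ℝ) ≤ r ^ (k + 1) := pow_nonneg hr0 _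
    calc (1 : ℝ) / (2 * (↑(k + 1) : ℝ) + 1) * r ^ (k+1) ≤ (1/3) * r ^ (k+1) :=
          mul_le_mul_of_nonneg_right h1 h2
      _ = _ := rfl
  refine hle.trans_eq ?_
  rw [hr]
  have key : ((1:ℝ) / (2 * (↑(m + 1) : ℝ) + 1)) ^ 2 / 3 *
      (1 - ((1:ℝ) / (2 * (↑(m + 1):ℝ) + 1)) ^ 2)⁻¹ =
      1 / (12 * ((m : ℝ) + 1)) - 1 / (12 * ((m : ℝ) + 2)) := by
    push_cast
    set x : ℝ := (m : ℝ) with hx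
    have hx0 : 0 ≤ x := Nat.cast_nonneg m
    have h23 : (2 * (x + 1) + 1) ≠ 0 := by positivity
    have hsub : 1 - (1 / (2 * (x + 1) + 1)) ^ 2 = (4*x^2 + 12*x + 8) / (2 * (x + 1) + 1)^2 := by
      field_simp
      ring
    rw [hsub, inv_div]
    have h2' : (4*x^2 + 12*x + 8) ≠ 0 := by positivity
    have hm1 : (x + 1) ≠ 0 := by positivity
    have hm2 : (x + 2) ≠ 0 := by positivity
    field_simp
    ring
  rw [← key]

open Filter Nat Topology Stirling in
lemma log_stirling_le (m : ℕ) :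
    Real.log (stirlingSeq (m + 1)) - 1 / (12 * ((m : ℝ) + 1)) ≤ Real.log (Real.sqrt π) := by
  set f : ℕ → ℝ := fun m => Real.log (stirlingSeq (m + 1)) - 1 / (12 * ((m : ℝ) + 1)) with hf
  have hmono : Monotone f := by
    apply monotone_nat_of_le_succ
    intro k
    have h := stirling_step k
    simp only [hf]
    push_cast
    have h1 : stirlingSeq (k + 1 + 1) = stirlingSeq (k + 2) := by norm_num
    have h2 : (1:ℝ) / (12 * ((k:ℝ) + 1 + 1)) = 1 / (12 * ((k:ℝ) + 2)) := by ring_nf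
    rw [h1, h2]
    linarith
  have htend : Tendsto f atTop (𝓝 (Real.log (Real.sqrt π))) := by
    have h1 : Tendsto (fun m : ℕ => Real.log (stirlingSeq (m + 1))) atTop
        (𝓝 (Real.log (Real.sqrt π))) := by
      have := (tendsto_stirlingSeq_sqrt_pi.comp (tendsto_add_atTop_nat 1))
      exact this.log (by positivity)
    have h2 : Tendsto (fun m : ℕ => 1 / (12 * ((m : ℝ) + 1))) atTop (𝓝 0) := by
      have ha : Tendsto (fun m : ℕ => 12 * ((m : ℝ) + 1)) atTop atTop := by
        apply Tendsto.const_mul_atTop (by norm_num : (0:ℝ) < 12)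
        exact tendsto_atTop_add_const_right _ 1 tendsto_natCast_atTop_atTop
      simp only [one_div]
      exact ha.inv_tendsto_atTop
    have h3 := h1.sub h2
    rw [sub_zero] at h3
    exact h3
  exact hmono.ge_of_tendsto htend m

open Filter Nat Topology Stirling in
lemma sqrt_pi_le_stirling (m : ℕ) : Real.sqrt π ≤ stirlingSeq (m + 1) := by
  have hanti : Antitone (stirlingSeq ∘ Nat.succ) := stirlingSeq'_antitone
  have htend : Tendsto (stirlingSeq ∘ Nat.succ) atTop (𝓝 (Real.sqrt π)) :=
    tendsto_stirlingSeq_sqrt_pi.comp (tendsto_add_atTop_nat 1)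
  exact hanti.le_of_tendsto htend m

/-- Stirling's approximation with explicit error bounds:
`√(2πn)·(n/e)^n ≤ n! ≤ e^{1/(12n)}·√(2πn)·(n/e)^n`. -/
theorem stirling_bounds (n : ℕ) (hn : 1 ≤ n) :
    Real.sqrt (2 * π * n) * ((n : ℝ) / Real.exp 1) ^ n ≤ (n.factorial : ℝ) ∧
    (n.factorial : ℝ) ≤
      Real.exp (1 / (12 * n)) * (Real.sqrt (2 * π * n) * ((n : ℝ) / Real.exp 1) ^ n) := by
  obtain ⟨m, rfl⟩ : ∃ m, n = m + 1 := ⟨n - 1, (Nat.succ_pred_eq_of_pos hn).symm⟩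
  set N : ℝ := ((m + 1 : ℕ) : ℝ) with hN
  have hNpos : (0:ℝ) < N := by positivity
  have hS : (0:ℝ) < Real.sqrt (2 * N) * (N / Real.exp 1) ^ (m + 1) := by positivity
  have hsplit : Real.sqrt (2 * π * N) = Real.sqrt π * Real.sqrt (2 * N) := by
    rw [← Real.sqrt_mul Real.pi_pos.le]
    ring_nf
  have hseq : Stirling.stirlingSeq (m + 1) =
      ((m + 1).factorial : ℝ) / (Real.sqrt (2 * N) * (N / Real.exp 1) ^ (m + 1)) := rfl
  constructor
  · have h := sqrt_pi_le_stirling m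
    rw [hseq, le_div_iff₀ hS] at h
    calc Real.sqrt (2 * π * N) * (N / Real.exp 1) ^ (m + 1)
        = Real.sqrt π * (Real.sqrt (2 * N) * (N / Real.exp 1) ^ (m + 1)) := by
          rw [hsplit]; ring
      _ ≤ _ := h
  · have h := log_stirling_le m
    have hpos : (0:ℝ) < Stirling.stirlingSeq (m + 1) := Stirling.stirlingSeq'_pos m
    have hcast : ((m : ℝ) + 1) = N := by push_cast [hN]; ring
    rw [hcast] at h
    have h2 : Stirling.stirlingSeq (m + 1) ≤ Real.exp (1 / (12 * N)) * Real.sqrt π := by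
      calc Stirling.stirlingSeq (m + 1)
          = Real.exp (Real.log (Stirling.stirlingSeq (m + 1))) := (Real.exp_log hpos).symm
        _ ≤ Real.exp (Real.log (Real.sqrt π) + 1 / (12 * N)) :=
            Real.exp_le_exp.mpr (by linarith)
        _ = Real.exp (1 / (12 * N)) * Real.sqrt π := by
            rw [Real.exp_add, Real.exp_log (by positivity)]; ring
    rw [hseq, div_le_iff₀ hS] at h2
    calc ((m + 1).factorial : ℝ) ≤
        Real.exp (1 / (12 * N)) * Real.sqrt π * (Real.sqrt (2 * N) * (N / Real.exp 1) ^ (m + 1)) :=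
          h2
      _ = Real.exp (1 / (12 * N)) * (Real.sqrt (2 * π * N) * (N / Real.exp 1) ^ (m + 1)) := by
          rw [hsplit]; ring
end
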